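/- VPC-SD is in NP: given a trace of n operations over a single variable, if there exists a legal schedule of the visible operations (all writes plus p₀'s reads) respecting program order, then there exists one of length at most n that can be verified legal by a single scan in polynomial time; hence PRAM consistency for such traces is decidable in nondeterministic polynomial time. -/

import Mathlib

/-- An operation: a read or write on variable `var` with value `val` (the issuing
process is given by the position of the operation in the trace). -/
structure Op where
  isRead : Bool
  var : ℕ
  val : ℕ
deriving DecidableEq

/-- Write of value `v` to the single shared variable `x` (variable `0`). -/
def Wr (v : ℕ) : Op := ⟨false, 0, v⟩

/-- Read of value `v` from the single shared variable `x` (variable `0`). -/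
def Rd (v : ℕ) : Op := ⟨true, 0, v⟩

/-- Values `a, a', b, b', c, c'` are the six distinct integers `1,…,6`. -/
def va : ℕ := 1
def va' : ℕ := 2
def vb : ℕ := 3
def vb' : ℕ := 4
def vc : ℕ := 5
def vc' : ℕ := 6

/-- Open subsequence `Rxa Rxa' Rxa Rxa' Rxa Rxa'`. -/
def openSeq : List Op := [Rd va, Rd va', Rd va, Rd va', Rd va, Rd va']

/-- Sum subsequence `(Rxb Rxb')^B`. -/
def sumSeq (B : ℕ) : List Op := (List.replicate B [Rd vb, Rd vb']).flatten

/-- Close subsequence `Rxc Rxc' Rxc Rxc' Rxc Rxc'`. -/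
def closeSeq : List Op := [Rd vc, Rd vc', Rd vc, Rd vc', Rd vc, Rd vc']

/-- The read-only process `P₀`: `m` slot sequences. -/
def P0 (m B : ℕ) : List Op := (List.replicate m (openSeq ++ sumSeq B ++ closeSeq)).flatten

/-- Process `P_{aᵢ}`: `Wxa'`, then `s(aᵢ)` copies of `Wxb'`, then `Wxc'`. -/
def Pa (sz : ℕ) : List Op := Wr va' :: (List.replicate sz (Wr vb') ++ [Wr vc'])

/-- The trace of the reduction from Unary 3-Partition: `P₀`, the processes
`P_{a₁},…,P_{a_{3m}}`, and the auxiliary processes `P_{c₁} = (Wxa)^{3m}`,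
`P_{c₂} = (Wxb)^{mB}`, `P_{c₃} = (Wxc)^{3m}`. -/
def reductionTrace (m B : ℕ) (s : Fin (3 * m) → ℕ) : List (List Op) :=
  P0 m B :: (List.ofFn (fun i => Pa (s i)) ++
    [List.replicate (3 * m) (Wr va), List.replicate (m * B) (Wr vb),
     List.replicate (3 * m) (Wr vc)])

/-- A position of an operation in a trace: a process index and an index in that
process's sequence. -/
def Pos (procs : List (List Op)) : Type := Σ i : Fin procs.length, Fin ((procs.get i).length)

/-- The operation at a position of the trace. -/
def opAt {procs : List (List Op)} (p : Pos procs) : Op := (procs.get p.1).get p.2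

/-- `σ` numbers the operations of the trace as a legal schedule respecting program
order: it is injective, operations of the same process keep their order, and every
read reads the value of the latest preceding write on the same variable. -/
def LegalSched (procs : List (List Op)) (σ : Pos procs → ℕ) : Prop :=
  Function.Injective σ ∧
  (∀ p q : Pos procs, p.1.val = q.1.val → p.2.val < q.2.val → σ p < σ q) ∧
  (∀ p : Pos procs, (opAt p).isRead = true →
    ∃ q : Pos procs, (opAt q).isRead = false ∧ σ q < σ p ∧
      (opAt q).var = (opAt p).var ∧ (opAt q).val = (opAt p).val ∧
      ∀ q' : Pos procs, (opAt q').isRead = false → (opAt q').var = (opAt p).var →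
        σ q < σ q' → ¬ σ q' < σ p)

/-- A solution of the 3-Partition instance: an assignment of the `3m` elements to `m`
triples, each summing to `B`. -/
def ThreePartSol (m B : ℕ) (s : Fin (3 * m) → ℕ) : Prop :=
  ∃ f : Fin (3 * m) → Fin m,
    (∀ j : Fin m, (Finset.univ.filter (fun i => f i = j)).card = 3) ∧
    (∀ j : Fin m, ∑ i ∈ Finset.univ.filter (fun i => f i = j), s i = B)

/-! Legality of a schedule only depends on the relative order in which it places the
operations. Renumbering an injective schedule by the rank of each operation, i.e. composing
it with the order isomorphism between its finite image and `Fin n`, therefore gives a legal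
schedule with values below the number `n` of operations. -/

section RankCompression

variable {α β γ : Type*} [LinearOrder β] [LinearOrder γ]

theorem le_iff_le_of_lt_iff_lt {σ : α → β} {τ : α → γ}
    (h : ∀ p q, τ p < τ q ↔ σ p < σ q) (p q : α) : τ p ≤ τ q ↔ σ p ≤ σ q := by
  simpa only [not_lt] using (h q p).not

theorem Function.Injective.of_lt_iff_lt {σ : α → β} {τ : α → γ} (hσ : Function.Injective σ)
    (h : ∀ p q, τ p < τ q ↔ σ p < σ q) : Function.Injective τ := fun p q hpq =>
  hσ <| le_antisymm ((le_iff_le_of_lt_iff_lt h p q).1 hpq.le)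
    ((le_iff_le_of_lt_iff_lt h q p).1 hpq.ge)

theorem Function.Injective.exists_fin_lt_iff_lt [Fintype α] {n : ℕ} {σ : α → β}
    (hσ : Function.Injective σ) (hn : Fintype.card α = n) :
    ∃ τ : α → Fin n, ∀ p q, τ p < τ q ↔ σ p < σ q := by
  have hcard : (Finset.univ.image σ).card = n := by
    rw [Finset.card_image_of_injective _ hσ, Finset.card_univ, hn]
  let rank := (Finset.univ.image σ).orderIsoOfFin hcard
  refine ⟨fun p => rank.symm ⟨σ p, Finset.mem_image_of_mem σ (Finset.mem_univ p)⟩,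
    fun p q => ?_⟩
  rw [rank.symm.lt_iff_lt, Subtype.mk_lt_mk]

end RankCompression

instance (procs : List (List Op)) : Fintype (Pos procs) := by
  unfold Pos; infer_instance

theorem card_Pos_eq_sum_length (procs : List (List Op)) :
    Fintype.card (Pos procs) = (procs.map List.length).sum := by
  rw [← Fin.sum_univ_fun_getElem procs List.length]
  exact (Fintype.card_sigma (α := fun i : Fin procs.length => Fin (procs.get i).length)).trans
    (by simp)

theorem LegalSched.of_lt_iff_lt {procs : List (List Op)} {σ τ : Pos procs → ℕ}
    (hσ : LegalSched procs σ) (h : ∀ p q, τ p < τ q ↔ σ p < σ q) : LegalSched procs τ := by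
  obtain ⟨hinj, hprog, hread⟩ := hσ
  refine ⟨hinj.of_lt_iff_lt h, fun p q hproc hidx => (h p q).2 (hprog p q hproc hidx),
    fun p hp => ?_⟩
  obtain ⟨q, hqw, hqp, hvar, hval, hlatest⟩ := hread p hp
  refine ⟨q, hqw, (h q p).2 hqp, hvar, hval, fun q' hq'w hq'var hqq' hq'p => ?_⟩
  exact hlatest q' hq'w hq'var ((h q q').1 hqq') ((h q' p).1 hq'p)

theorem stmt9_general (procs : List (List Op)) :
    (∃ σ : Pos procs → ℕ, LegalSched procs σ) →
    ∃ σ' : Pos procs → Fin ((procs.map List.length).sum),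
      Function.Injective σ' ∧ LegalSched procs (fun p => (σ' p).val) := by
  rintro ⟨σ, hσ⟩
  obtain ⟨τ, hτ⟩ := hσ.1.exists_fin_lt_iff_lt (card_Pos_eq_sum_length procs)
  exact ⟨τ, hσ.1.of_lt_iff_lt hτ, hσ.of_lt_iff_lt hτ⟩

/-- VPC-SD is in NP (witness bounding): for a single-variable trace whose reads all
belong to process `p₀` (so its visible operations are all operations), if some legal
schedule respecting program order exists, then one exists whose numbering takes values
in `Fin n` where `n` is the total number of operations of the trace; such a schedule
can be checked for legality by a single scan. -/
theorem stmt9 (procs : List (List Op))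
    (hsingle : ∀ p : Pos procs, (opAt p).var = 0)
    (hreads : ∀ p : Pos procs, (opAt p).isRead = true → p.1.val = 0) :
    (∃ σ : Pos procs → ℕ, LegalSched procs σ) →
    ∃ σ' : Pos procs → Fin ((procs.map List.length).sum),
      Function.Injective σ' ∧ LegalSched procs (fun p => (σ' p).val) :=
  stmt9_general procs
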